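/- Let R be a complete Noetherian local ring with maximal ideal m, and let P^• = [P^0 → P^1 → P^2] be a complex of finitely generated free R-modules concentrated in degrees 0, 1, 2. If H^0(P^•) = 0 and H^0(P^• ⊗_R R/m) = 0, then the cokernel X of the map P^0 → P^1 is a projective (equivalently free) R-module; consequently P^• is quasi-isomorphic to a complex of finitely generated free R-modules concentrated in degrees 1 and 2. -/
import Mathlib

theorem stmt0
    (R : Type*) [CommRing R] [IsLocalRing R] [IsNoetherianRing R]
    [IsAdicComplete (IsLocalRing.maximalIdeal R) R]
    (P0 P1 P2 : Type*)
    [AddCommGroup P0] [Module R P0] [Module.Free R P0] [Module.Finite R P0]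
    [AddCommGroup P1] [Module R P1] [Module.Free R P1] [Module.Finite R P1]
    [AddCommGroup P2] [Module R P2] [Module.Free R P2] [Module.Finite R P2]
    (d0 : P0 →ₗ[R] P1) (d1 : P1 →ₗ[R] P2)
    (hcomplex : d1.comp d0 = 0)
    (hH0 : Function.Injective d0)
    (hH0bar : Function.Injective
      (d0.baseChange (R ⧸ IsLocalRing.maximalIdeal R))) :
    Module.Projective R (P1 ⧸ LinearMap.range d0) ∧
      Module.Free R (P1 ⧸ LinearMap.range d0) := by
  have hf : Function.Injective (d0.lTensor (IsLocalRing.ResidueField R)) := by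
    rwa [← LinearMap.baseChange_eq_ltensor]
  have hfree : Module.Free R (P1 ⧸ LinearMap.range d0) :=
    Module.free_of_lTensor_residueField_injective d0 (LinearMap.range d0).mkQ
      (Submodule.mkQ_surjective _) d0.exact_map_mkQ_range hf
  exact ⟨@Module.Projective.of_free R _ _ _ _ hfree, hfree⟩
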